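/- For any finite simple graphs H₁, …, H_k, each with at least one vertex, f(H₁, …, H_k) ≤ ∏_{i=1}^{k} n(H_i); indeed, the Cartesian (box) product H₁ □ ⋯ □ H_k is (H₁,…,H_k)-full. -/

import Mathlib

open SimpleGraph Finset

/-- Every vertex of `G` lies in an induced copy of `H` (a `SimpleGraph.Embedding`
`H ↪g G` is exactly an induced-subgraph copy of `H` in `G`). -/
def CoveredByCopies {α β : Type*} (G : SimpleGraph α) (H : SimpleGraph β) : Prop :=
  ∀ v : α, ∃ φ : H ↪g G, v ∈ Set.range ⇑φ

/-- `G` is `(H 0, …, H (k-1))`-full: for each `i`, the induced copies of `H i` cover `V(G)`. -/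
def IsFullFamily {k : ℕ} {α : Type*} (G : SimpleGraph α)
    {W : Fin k → Type*} (H : ∀ i, SimpleGraph (W i)) : Prop :=
  ∀ i, CoveredByCopies G (H i)

/-- `f(H 0, …, H (k-1))`: the minimum order of an `(H 0, …, H (k-1))`-full graph. -/
noncomputable def fullNum {k : ℕ} {W : Fin k → Type*} (H : ∀ i, SimpleGraph (W i)) : ℕ :=
  sInf {N : ℕ | ∃ G : SimpleGraph (Fin N), IsFullFamily G H}

/-- The Cartesian (box) product of a family of graphs: `x` and `y` are adjacent iff
they differ in exactly one coordinate `i`, where they are adjacent in `H i`. -/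
def boxProdFamily {k : ℕ} {W : Fin k → Type*} (H : ∀ i, SimpleGraph (W i)) :
    SimpleGraph (∀ i, W i) where
  Adj x y := ∃ i, (H i).Adj (x i) (y i) ∧ ∀ j, j ≠ i → x j = y j
  symm := by
    constructor
    rintro x y ⟨i, hadj, heq⟩
    exact ⟨i, (H i).symm.symm _ _ hadj, fun j hj => (heq j hj).symm⟩
  loopless := by
    constructor
    rintro x ⟨i, hadj, -⟩
    exact (H i).irrefl hadj

/-!
Fixing all coordinates of a vertex `v` of the box product except the `i`-th gives an induced
copy of `H i` through `v`, and the box product has `∏ n(H_i)` vertices; relabelling them by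
`Fin (∏ n(H_i))` transports fullness.
-/

theorem CoveredByCopies.of_iso {α α' β : Type*} {G : SimpleGraph α} {G' : SimpleGraph α'}
    {H : SimpleGraph β} (h : CoveredByCopies G H) (e : G ≃g G') : CoveredByCopies G' H := by
  intro v
  obtain ⟨φ, w, hw⟩ := h (e.symm v)
  exact ⟨φ.trans e.toEmbedding, w, by simp [hw]⟩

theorem IsFullFamily.of_iso {k : ℕ} {α α' : Type*} {G : SimpleGraph α} {G' : SimpleGraph α'}
    {W : Fin k → Type*} {H : ∀ i, SimpleGraph (W i)} (h : IsFullFamily G H) (e : G ≃g G') :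
    IsFullFamily G' H :=
  fun i => (h i).of_iso e

theorem fullNum_le_card {k : ℕ} {α : Type*} [Fintype α] {G : SimpleGraph α}
    {W : Fin k → Type*} {H : ∀ i, SimpleGraph (W i)} (h : IsFullFamily G H) :
    fullNum H ≤ Fintype.card α :=
  Nat.sInf_le ⟨_, h.of_iso (Iso.map (Fintype.equivFin α) G)⟩

section boxProdFamily

variable {k : ℕ} {W : Fin k → Type*} (H : ∀ i, SimpleGraph (W i))

theorem boxProdFamily_adj_update_update_iff (v : ∀ j, W j) (i : Fin k) (w w' : W i) :
    (boxProdFamily H).Adj (Function.update v i w) (Function.update v i w') ↔ (H i).Adj w w' := by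
  constructor
  · rintro ⟨j, hadj, -⟩
    rcases eq_or_ne j i with rfl | hji
    · simpa using hadj
    · simp only [Function.update_of_ne hji] at hadj
      exact absurd hadj (H j).irrefl
  · intro h
    exact ⟨i, by simpa using h, fun j hj => by simp [Function.update_of_ne hj]⟩

def boxProdFamilyFiber (i : Fin k) (v : ∀ j, W j) : H i ↪g boxProdFamily H where
  toFun w := Function.update v i w
  inj' := Function.update_injective v i
  map_rel_iff' := boxProdFamily_adj_update_update_iff H v i _ _

theorem boxProdFamilyFiber_apply_self (i : Fin k) (v : ∀ j, W j) :
    boxProdFamilyFiber H i v (v i) = v := by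
  simp [boxProdFamilyFiber]

theorem isFullFamily_boxProdFamily : IsFullFamily (boxProdFamily H) H :=
  fun i v => ⟨boxProdFamilyFiber H i v, v i, boxProdFamilyFiber_apply_self H i v⟩

end boxProdFamily

theorem fullNum_le_prod_general {k : ℕ} {W : Fin k → Type*} [∀ i, Fintype (W i)]
    (H : ∀ i, SimpleGraph (W i)) :
    fullNum H ≤ ∏ i, Fintype.card (W i) ∧ IsFullFamily (boxProdFamily H) H := by
  have hfull := isFullFamily_boxProdFamily H
  exact ⟨(fullNum_le_card hfull).trans_eq Fintype.card_pi, hfull⟩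

/-- `f(H₁, …, H_k) ≤ ∏ n(H_i)`; indeed the Cartesian (box) product
`H₁ □ ⋯ □ H_k` is `(H₁, …, H_k)`-full. -/
theorem fullNum_le_prod {k : ℕ} {W : Fin k → Type*} [∀ i, Fintype (W i)]
    (H : ∀ i, SimpleGraph (W i)) (hne : ∀ i, Nonempty (W i)) :
    fullNum H ≤ ∏ i, Fintype.card (W i) ∧ IsFullFamily (boxProdFamily H) H :=
  fullNum_le_prod_general H
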